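/- arXiv:2510.02406 — 2 statements merged into one kernel-verified Lean document; each statement's English description precedes it below -/
import Mathlib

section
/- Let (X,d) be a complete metric space with A, B ⊆ X such that A₀ is nonempty and closed. If T : A → B is a proximal contraction of the first kind (with constant α ∈ [0,1)) satisfying T(A₀) ⊆ B₀, then there exists a unique x* ∈ A with d(x*, Tx*) = d(A,B), and any sequence (xₙ) in A with d(xₙ₊₁, Txₙ) = d(A,B) for all n converges to x*. -/
open Filter Topology Set

/-- A Geraghty function: maps `[0,∞)` into `[0,1)` and `β(tₙ) → 1` forces `tₙ → 0`. -/
def GeraghtyFn (β : ℝ → ℝ) : Prop :=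
  (∀ t : ℝ, 0 ≤ t → 0 ≤ β t ∧ β t < 1) ∧
  ∀ t : ℕ → ℝ, (∀ n, 0 ≤ t n) →
    Tendsto (fun n => β (t n)) atTop (𝓝 1) → Tendsto t atTop (𝓝 0)

/-- `setDist A B = inf {d(a,b) : a ∈ A, b ∈ B}`. -/
noncomputable def setDist {X : Type*} [MetricSpace X] (A B : Set X) : ℝ :=
  sInf ((fun p : X × X => dist p.1 p.2) '' A ×ˢ B)

/-- `A₀`, the best proximity subset of `A`. -/
def proxA {X : Type*} [MetricSpace X] (A B : Set X) : Set X :=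
  {x ∈ A | ∃ y ∈ B, dist x y = setDist A B}

/-- `B₀`, the best proximity subset of `B`. -/
def proxB {X : Type*} [MetricSpace X] (A B : Set X) : Set X :=
  {y ∈ B | ∃ x ∈ A, dist x y = setDist A B}

def IsProximalContraction {X : Type*} [MetricSpace X] (A B : Set X) (T : X → X) (α : ℝ) :
    Prop :=
  ∀ u₁ u₂ x₁ x₂, u₁ ∈ A → u₂ ∈ A → x₁ ∈ A → x₂ ∈ A →
    dist u₁ (T x₁) = setDist A B → dist u₂ (T x₂) = setDist A B →
    dist u₁ u₂ ≤ α * dist x₁ x₂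

theorem exists_mem_proxA_dist_eq_of_mapsTo {X : Type*} [MetricSpace X] {A B : Set X}
    {T : X → X} (hT0 : MapsTo T (proxA A B) (proxB A B)) {x : X} (hx : x ∈ proxA A B) :
    ∃ u ∈ proxA A B, dist u (T x) = setDist A B := by
  obtain ⟨hTxB, u, hu, hud⟩ := hT0 hx
  exact ⟨u, ⟨hu, T x, hTxB, hud⟩, hud⟩

namespace IsProximalContraction

variable {X : Type*} [MetricSpace X] {A B : Set X} {T : X → X} {α : ℝ}

theorem eq_of_bestProximity (hT : IsProximalContraction A B T α) (hα : α < 1)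
    {x y : X} (hx : x ∈ A) (hy : y ∈ A)
    (hxT : dist x (T x) = setDist A B) (hyT : dist y (T y) = setDist A B) : y = x := by
  have hle : dist y x ≤ α * dist y x := hT y x y x hy hx hy hx hyT hxT
  exact dist_le_zero.mp (by nlinarith [dist_nonneg (x := y) (y := x)])

theorem dist_le_pow_mul_of_bestProximity (hT : IsProximalContraction A B T α) (hα : 0 ≤ α)
    {x : X} (hx : x ∈ A) (hxT : dist x (T x) = setDist A B)
    {s : ℕ → X} (hs : ∀ n, s n ∈ A) (hsT : ∀ n, dist (s (n + 1)) (T (s n)) = setDist A B)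
    (n : ℕ) : dist (s n) x ≤ α ^ n * dist (s 0) x := by
  induction n with
  | zero => simp
  | succ n ih =>
    calc dist (s (n + 1)) x ≤ α * dist (s n) x :=
          hT _ _ _ _ (hs (n + 1)) hx (hs n) hx (hsT n) hxT
      _ ≤ α * (α ^ n * dist (s 0) x) := mul_le_mul_of_nonneg_left ih hα
      _ = α ^ (n + 1) * dist (s 0) x := by ring

theorem tendsto_of_bestProximity (hT : IsProximalContraction A B T α) (hα0 : 0 ≤ α) (hα1 : α < 1)
    {x : X} (hx : x ∈ A) (hxT : dist x (T x) = setDist A B)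
    {s : ℕ → X} (hs : ∀ n, s n ∈ A) (hsT : ∀ n, dist (s (n + 1)) (T (s n)) = setDist A B) :
    Tendsto s atTop (𝓝 x) := by
  rw [tendsto_iff_dist_tendsto_zero]
  refine squeeze_zero (fun _ ↦ dist_nonneg)
    (hT.dist_le_pow_mul_of_bestProximity hα0 hx hxT hs hsT) ?_
  simpa using (tendsto_pow_atTop_nhds_zero_of_lt_one hα0 hα1).mul_const (dist (s 0) x)

/- Choosing for each `x ∈ A₀` a point `u ∈ A₀` with `d(u, Tx) = d(A, B)` gives a self-map of
`A₀` which the proximal contraction property makes an `α`-contraction; its Banach fixed point is a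
best proximity point. -/
theorem exists_bestProximity [CompleteSpace X] (hT : IsProximalContraction A B T α)
    (hα0 : 0 ≤ α) (hα1 : α < 1) (hA0ne : (proxA A B).Nonempty) (hA0cl : IsClosed (proxA A B))
    (hT0 : MapsTo T (proxA A B) (proxB A B)) :
    ∃ x ∈ A, dist x (T x) = setDist A B := by
  choose! S hSA0 hST using fun x (hx : x ∈ proxA A B) ↦ exists_mem_proxA_dist_eq_of_mapsTo hT0 hx
  let S₀ : proxA A B → proxA A B := fun x ↦ ⟨S x, hSA0 x x.2⟩
  have hS₀ : ContractingWith ⟨α, hα0⟩ S₀ := by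
    refine ⟨hα1, LipschitzWith.of_dist_le_mul fun x y ↦ ?_⟩
    exact hT _ _ _ _ (hSA0 x x.2).1 (hSA0 y y.2).1 x.2.1 y.2.1 (hST x x.2) (hST y y.2)
  have : Nonempty (proxA A B) := hA0ne.to_subtype
  have : CompleteSpace (proxA A B) := hA0cl.isComplete.completeSpace_coe
  set x := hS₀.fixedPoint S₀
  have hfix : S x = x := congrArg Subtype.val hS₀.fixedPoint_isFixedPt
  exact ⟨x, x.2.1, by simpa only [hfix] using hST x x.2⟩

end IsProximalContraction

theorem proximal_contraction_best_proximity_general {X : Type*} [MetricSpace X] [CompleteSpace X]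
    (A B : Set X)
    (hA0ne : (proxA A B).Nonempty) (hA0cl : IsClosed (proxA A B))
    (T : X → X)
    (α : ℝ) (hα0 : 0 ≤ α) (hα1 : α < 1)
    (hprox : ∀ u₁ u₂ x₁ x₂, u₁ ∈ A → u₂ ∈ A → x₁ ∈ A → x₂ ∈ A →
      dist u₁ (T x₁) = setDist A B → dist u₂ (T x₂) = setDist A B →
      dist u₁ u₂ ≤ α * dist x₁ x₂)
    (hT0 : MapsTo T (proxA A B) (proxB A B)) :
    ∃ x ∈ A, dist x (T x) = setDist A B ∧
      (∀ y ∈ A, dist y (T y) = setDist A B → y = x) ∧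
      ∀ s : ℕ → X, (∀ n, s n ∈ A) →
        (∀ n, dist (s (n+1)) (T (s n)) = setDist A B) →
        Tendsto s atTop (𝓝 x) := by
  have hT : IsProximalContraction A B T α := hprox
  obtain ⟨x, hx, hxT⟩ := hT.exists_bestProximity hα0 hα1 hA0ne hA0cl hT0
  exact ⟨x, hx, hxT, fun y hy hyT ↦ hT.eq_of_bestProximity hα1 hx hy hxT hyT,
    fun s hs hsT ↦ hT.tendsto_of_bestProximity hα0 hα1 hx hxT hs hsT⟩

/-- Best proximity point theorem for proximal contractions of the first kind. -/
theorem proximal_contraction_best_proximity {X : Type*} [MetricSpace X] [CompleteSpace X]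
    (A B : Set X) (hA : A.Nonempty) (hB : B.Nonempty)
    (hA0ne : (proxA A B).Nonempty) (hA0cl : IsClosed (proxA A B))
    (T : X → X) (hTAB : MapsTo T A B)
    (α : ℝ) (hα0 : 0 ≤ α) (hα1 : α < 1)
    (hprox : ∀ u₁ u₂ x₁ x₂, u₁ ∈ A → u₂ ∈ A → x₁ ∈ A → x₂ ∈ A →
      dist u₁ (T x₁) = setDist A B → dist u₂ (T x₂) = setDist A B →
      dist u₁ u₂ ≤ α * dist x₁ x₂)
    (hT0 : MapsTo T (proxA A B) (proxB A B)) :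
    ∃ x ∈ A, dist x (T x) = setDist A B ∧
      (∀ y ∈ A, dist y (T y) = setDist A B → y = x) ∧
      ∀ s : ℕ → X, (∀ n, s n ∈ A) →
        (∀ n, dist (s (n+1)) (T (s n)) = setDist A B) →
        Tendsto s atTop (𝓝 x) :=
  proximal_contraction_best_proximity_general A B hA0ne hA0cl T α hα0 hα1 hprox hT0
end

section
/- Under the hypotheses of the extended proximal Geraghty theorem (S auxiliary, continuous, injective, subsequentially convergent with S(A₀) ⊆ A₀, S(B₀) ⊆ B₀; T : A → B with T(A₀) ⊆ B₀ satisfying the S-proximal Geraghty condition with Geraghty function β), any sequence (xₙ) in A₀ satisfying d(Sxₙ₊₁, STxₙ) = d(A,B) for all n has the property that (Sxₙ) is a Cauchy sequence in X. -/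
open Filter Topology Set

/-!
Put `s n = S xₙ`. The S-proximal Geraghty condition gives
`d(s (m+1), s (n+1)) ≤ β(d(s m, s n)) · d(s m, s n)` for all `m, n`. A sequence `t` bounded below by
some `c > 0` with `t k - e k ≤ β(t k) · t k` and `e k → 0` would force `β(t k) → 1`, hence `t k → 0`.
Applied to the consecutive distances (with `e` the decrements of this antitone sequence) this shows
that they tend to `0`; applied to `d(s m, s n) ≥ ε` with `e = d(s m, s (m+1)) + d(s n, s (n+1))` it
shows that `s` is Cauchy.
-/

theorem GeraghtyFn.not_forall_le_of_sub_le_mul {β : ℝ → ℝ} (hβ : GeraghtyFn β) {t e : ℕ → ℝ}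
    {c : ℝ} (hc : 0 < c) (he : Tendsto e atTop (𝓝 0)) (h : ∀ k, t k - e k ≤ β (t k) * t k) :
    ¬ ∀ k, c ≤ t k := by
  intro hct
  have ht : ∀ k, 0 ≤ t k := fun k => hc.le.trans (hct k)
  have hgap : Tendsto (fun k => 1 - β (t k)) atTop (𝓝 0) := by
    refine squeeze_zero (fun k => sub_nonneg.2 (hβ.1 _ (ht k)).2.le) (fun k => ?_)
      (by simpa using he.div_const c)
    rw [le_div_iff₀ hc]
    nlinarith [h k, hct k, (hβ.1 _ (ht k)).2]
  have hβt : Tendsto (fun k => β (t k)) atTop (𝓝 1) := by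
    simpa using (tendsto_const_nhds (x := (1 : ℝ))).sub hgap
  exact hc.not_ge (ge_of_tendsto' (hβ.2 t ht hβt) hct)

section GeraghtySequence

variable {X : Type*} [PseudoMetricSpace X] {β : ℝ → ℝ} {s : ℕ → X}

theorem tendsto_dist_succ_of_geraghty (hβ : GeraghtyFn β)
    (hs : ∀ n, dist (s (n + 1)) (s (n + 2)) ≤
      β (dist (s n) (s (n + 1))) * dist (s n) (s (n + 1))) :
    Tendsto (fun n => dist (s n) (s (n + 1))) atTop (𝓝 0) := by
  set d := fun n => dist (s n) (s (n + 1))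
  have hanti : Antitone d := antitone_nat_of_succ_le fun n =>
    (hs n).trans (mul_le_of_le_one_left dist_nonneg (hβ.1 _ dist_nonneg).2.le)
  have hbdd : BddBelow (range d) := ⟨0, by rintro _ ⟨n, rfl⟩; exact dist_nonneg⟩
  have hlim := tendsto_atTop_ciInf hanti hbdd
  obtain hr | hr := (le_ciInf fun n => dist_nonneg : 0 ≤ ⨅ n, d n).eq_or_lt
  · rwa [← hr] at hlim
  refine absurd (fun n => ciInf_le hbdd n)
    (hβ.not_forall_le_of_sub_le_mul hr (e := fun n => d n - d (n + 1)) ?_ fun n => ?_)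
  · simpa using hlim.sub (hlim.comp (tendsto_add_atTop_nat 1))
  · simpa using hs n

theorem cauchySeq_of_geraghty (hβ : GeraghtyFn β)
    (hs : ∀ m n, dist (s (m + 1)) (s (n + 1)) ≤ β (dist (s m) (s n)) * dist (s m) (s n)) :
    CauchySeq s := by
  have hd := tendsto_dist_succ_of_geraghty hβ fun n => hs n (n + 1)
  rw [Metric.cauchySeq_iff]
  by_contra! hfar
  obtain ⟨ε, hε, hfar⟩ := hfar
  choose m hm n hn hmn using hfar
  refine hβ.not_forall_le_of_sub_le_mul hε (t := fun k => dist (s (m k)) (s (n k)))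
    (e := fun k => dist (s (m k)) (s (m k + 1)) + dist (s (n k)) (s (n k + 1))) ?_ (fun k => ?_) hmn
  · simpa using (hd.comp (tendsto_atTop_mono hm tendsto_id)).add
      (hd.comp (tendsto_atTop_mono hn tendsto_id))
  · have := dist_triangle4 (s (m k)) (s (m k + 1)) (s (n k + 1)) (s (n k))
    rw [dist_comm (s (n k + 1))] at this
    linarith [hs (m k) (n k)]

end GeraghtySequence

theorem extended_proximal_geraghty_cauchy_general {X : Type*} [MetricSpace X]
    (A B : Set X) (S : X → X) (T : X → X) (β : ℝ → ℝ) (hβ : GeraghtyFn β)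
    (hger : ∀ u v x y, u ∈ A → v ∈ A → x ∈ A → y ∈ A →
      dist (S u) (S (T x)) = setDist A B → dist (S v) (S (T y)) = setDist A B →
      dist (S u) (S v) ≤ β (dist (S x) (S y)) * dist (S x) (S y))
    (x : ℕ → X) (hx : ∀ n, x n ∈ proxA A B)
    (hiter : ∀ n, dist (S (x (n+1))) (S (T (x n))) = setDist A B) :
    CauchySeq (fun n => S (x n)) :=
  cauchySeq_of_geraghty hβ fun m n =>
    hger _ _ _ _ (hx _).1 (hx _).1 (hx _).1 (hx _).1 (hiter m) (hiter n)

/-- In the extended proximal Geraghty setting, proximal iterates have Cauchy `S`-images. -/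
theorem extended_proximal_geraghty_cauchy {X : Type*} [MetricSpace X] [CompleteSpace X]
    (A B : Set X) (hA : A.Nonempty) (hB : B.Nonempty)
    (hA0ne : (proxA A B).Nonempty) (hA0cl : IsClosed (proxA A B))
    (hB0ne : (proxB A B).Nonempty) (hB0cl : IsClosed (proxB A B))
    (S : X → X) (hSmaps : MapsTo S (A ∪ B) (A ∪ B))
    (hScont : ContinuousOn S (A ∪ B)) (hSinj : InjOn S (A ∪ B))
    (hSsub : ∀ x : ℕ → X, (∀ n, x n ∈ A ∪ B) →
      (∃ L, Tendsto (fun n => S (x n)) atTop (𝓝 L)) →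
      ∃ φ : ℕ → ℕ, StrictMono φ ∧ ∃ l ∈ A ∪ B, Tendsto (fun k => x (φ k)) atTop (𝓝 l))
    (hSA0 : MapsTo S (proxA A B) (proxA A B)) (hSB0 : MapsTo S (proxB A B) (proxB A B))
    (T : X → X) (hTAB : MapsTo T A B) (hT0 : MapsTo T (proxA A B) (proxB A B))
    (β : ℝ → ℝ) (hβ : GeraghtyFn β)
    (hger : ∀ u v x y, u ∈ A → v ∈ A → x ∈ A → y ∈ A →
      dist (S u) (S (T x)) = setDist A B → dist (S v) (S (T y)) = setDist A B →
      dist (S u) (S v) ≤ β (dist (S x) (S y)) * dist (S x) (S y))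
    (x : ℕ → X) (hx : ∀ n, x n ∈ proxA A B)
    (hiter : ∀ n, dist (S (x (n+1))) (S (T (x n))) = setDist A B) :
    CauchySeq (fun n => S (x n)) :=
  extended_proximal_geraghty_cauchy_general A B S T β hβ hger x hx hiter
end
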